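/- For the sorted reasoning sequence of the chain a_k = (k, k+1) for 1 ≤ k ≤ s (identity permutation, so x = (1,2,2,3,3,4,…,s,s+1)) with reasoning start x(2s+1) = 1, the information quantity at the final position satisfies C^l_(2s+1) = |V^l_(2s+1)| ≥ 2^(l−1) for every l with 1 ≤ l and 2^(l−1) ≤ s. -/
import Mathlib


/-- The sorted reasoning sequence of the chain `a_k = (k, k+1)`, `1 ≤ k ≤ s`, with
the identity permutation: `x(2m-1) = m`, `x(2m) = m+1`, and the reasoning start
`x(2s+1) = 1`. -/
def sortedX (s : ℤ) (i : ℤ) : ℤ :=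
  if i = 2 * s + 1 then 1 else if Even i then i / 2 + 1 else (i + 1) / 2

/-- Value sets of maximal masked information propagation (positions `≥ 1`). -/
def valueSetM (x : ℤ → ℤ) : ℕ → ℤ → Set ℤ
  | 0, i => {x i}
  | 1, i => if Even i then {x (i - 1), x i} else {x i}
  | l + 2, i =>
      valueSetM x (l + 1) i ∪
        ⋃ (j : ℤ)
          (_ : 1 ≤ j ∧ j < i ∧ (valueSetM x (l + 1) j ∩ valueSetM x (l + 1) i).Nonempty),
          valueSetM x (l + 1) j

lemma valueSetM_finite (x : ℤ → ℤ) : ∀ (l : ℕ) (i : ℤ), (valueSetM x l i).Finite := by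
  intro l
  induction l using Nat.strong_induction_on with
  | _ l ih =>
    match l with
    | 0 => intro i; simpa [valueSetM] using Set.finite_singleton (x i)
    | 1 =>
      intro i
      rw [valueSetM]
      split
      · exact (Set.finite_singleton _).insert _
      · exact Set.finite_singleton _
    | (l + 2) =>
      intro i
      rw [valueSetM]
      refine Set.Finite.union (ih (l + 1) (by omega) i) ?_
      refine Set.Finite.subset ((Set.finite_Icc 1 (i - 1)).biUnion
        (fun j _ => ih (l + 1) (by omega) j)) ?_
      intro a ha
      simp only [Set.mem_iUnion] at ha
      obtain ⟨j, ⟨h1, h2, _⟩, hmem⟩ := ha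
      exact Set.mem_biUnion (Set.mem_Icc.2 ⟨h1, by omega⟩) hmem

lemma valueSetM_succ (x : ℤ → ℤ) (l : ℕ) (i : ℤ) :
    valueSetM x (l + 2) i =
      valueSetM x (l + 1) i ∪
        ⋃ (j : ℤ)
          (_ : 1 ≤ j ∧ j < i ∧ (valueSetM x (l + 1) j ∩ valueSetM x (l + 1) i).Nonempty),
          valueSetM x (l + 1) j := rfl

lemma valueSetM_mono (x : ℤ → ℤ) (l : ℕ) (i : ℤ) :
    valueSetM x (l + 1) i ⊆ valueSetM x (l + 2) i := by
  rw [valueSetM_succ]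
  exact Set.subset_union_left

lemma valueSetM_step (x : ℤ → ℤ) (l : ℕ) (i j : ℤ) (h1 : 1 ≤ j) (h2 : j < i)
    (h3 : (valueSetM x (l + 1) j ∩ valueSetM x (l + 1) i).Nonempty) :
    valueSetM x (l + 1) j ⊆ valueSetM x (l + 2) i := by
  intro a ha
  rw [valueSetM_succ]
  refine Set.mem_union_right _ ?_
  exact Set.mem_iUnion.2 ⟨j, Set.mem_iUnion.2 ⟨⟨h1, h2, h3⟩, ha⟩⟩

lemma sortedX_even (s m : ℤ) : sortedX s (2 * m) = m + 1 := by
  unfold sortedX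
  rw [if_neg (by omega), if_pos ⟨m, by ring⟩]
  omega

lemma sortedX_odd (s m : ℤ) (h : m ≤ s) : sortedX s (2 * m - 1) = m := by
  unfold sortedX
  rw [if_neg (by omega), if_neg (by rintro ⟨r, hr⟩; omega)]
  omega

lemma v1_even (s m : ℤ) (hm : 1 ≤ m) (hms : m ≤ s) :
    valueSetM (sortedX s) 1 (2 * m) = {m, m + 1} := by
  rw [valueSetM, if_pos ⟨m, by ring⟩]
  have h1 : (2 * m - 1 : ℤ) = 2 * m - 1 := rfl
  rw [show (2 * m - 1 : ℤ) = 2 * m - 1 from rfl, sortedX_odd s m hms, sortedX_even s m]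

lemma v1_start (s : ℤ) : valueSetM (sortedX s) 1 (2 * s + 1) = {1} := by
  rw [valueSetM, if_neg (by rintro ⟨r, hr⟩; omega)]
  simp [sortedX]

lemma evenInterval (s : ℤ) (hs : 1 ≤ s) :
    ∀ (l : ℕ) (m : ℤ), (2 : ℤ) ^ l ≤ m → m ≤ s →
      Set.Icc (m + 1 - 2 ^ l) (m + 1) ⊆ valueSetM (sortedX s) (l + 1) (2 * m) := by
  intro l
  induction l with
  | zero =>
    intro m h1 h2 k hk
    rw [v1_even s m (by simpa using h1) h2]
    simp only [pow_zero] at hk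
    simp only [Set.mem_Icc] at hk
    have : k = m ∨ k = m + 1 := by omega
    rcases this with h | h <;> simp [h]
  | succ l ih =>
    intro m h1 h2
    have hp2 : (2 : ℤ) ^ (l + 1) = 2 ^ l * 2 := pow_succ 2 l
    have hp : (0 : ℤ) < 2 ^ l := by positivity
    have hA := ih m (by omega) h2
    have hB := ih (m - 2 ^ l) (by omega) (by omega)
    have hw : ((m + 1 - 2 ^ l : ℤ)) ∈
        valueSetM (sortedX s) (l + 1) (2 * (m - 2 ^ l)) ∩
          valueSetM (sortedX s) (l + 1) (2 * m) :=
      ⟨hB (Set.mem_Icc.2 ⟨by omega, by omega⟩), hA (Set.mem_Icc.2 ⟨by omega, by omega⟩)⟩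
    intro k hk
    simp only [Set.mem_Icc] at hk
    by_cases hc : k ≤ m + 1 - 2 ^ l
    · exact valueSetM_step (sortedX s) l (2 * m) (2 * (m - 2 ^ l)) (by omega) (by omega)
        ⟨_, hw⟩ (hB (Set.mem_Icc.2 ⟨by omega, by omega⟩))
    · exact valueSetM_mono (sortedX s) l (2 * m) (hA (Set.mem_Icc.2 ⟨by omega, by omega⟩))

lemma mainInterval (s : ℤ) (hs : 1 ≤ s) :
    ∀ l : ℕ, (2 : ℤ) ^ l ≤ s →
      Set.Icc (1 : ℤ) (2 ^ l) ⊆ valueSetM (sortedX s) (l + 1) (2 * s + 1) := by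
  intro l
  induction l with
  | zero =>
    intro _ k hk
    rw [v1_start s]
    simp only [pow_zero, Set.mem_Icc] at hk
    simp [show k = 1 by omega]
  | succ l ih =>
    intro h
    have hp2 : (2 : ℤ) ^ (l + 1) = 2 ^ l * 2 := pow_succ 2 l
    have hp : (0 : ℤ) < 2 ^ l := by positivity
    have ihh := ih (by omega)
    have hEI := evenInterval s hs l (2 ^ (l + 1) - 1) (by omega) (by omega)
    have hw : ((2 : ℤ) ^ l) ∈
        valueSetM (sortedX s) (l + 1) (2 * (2 ^ (l + 1) - 1)) ∩
          valueSetM (sortedX s) (l + 1) (2 * s + 1) :=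
      ⟨hEI (Set.mem_Icc.2 ⟨by omega, by omega⟩), ihh (Set.mem_Icc.2 ⟨by omega, le_refl _⟩)⟩
    intro k hk
    simp only [Set.mem_Icc] at hk
    by_cases hc : k ≤ 2 ^ l
    · exact valueSetM_mono (sortedX s) l (2 * s + 1) (ihh (Set.mem_Icc.2 ⟨hk.1, hc⟩))
    · exact valueSetM_step (sortedX s) l (2 * s + 1) (2 * (2 ^ (l + 1) - 1)) (by omega)
        (by omega) ⟨_, hw⟩ (hEI (Set.mem_Icc.2 ⟨by omega, by omega⟩))

/-- for the sorted sequence `(1,2,2,3,…,s,s+1)` with reasoning start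
`1`, the information quantity at the final position is at least `2^(l-1)` for every
layer `l` with `1 ≤ l` and `2^(l-1) ≤ s`. -/
theorem sorted_lower_bound_attained
    (s : ℤ) (hs : 1 ≤ s) (l : ℕ) (hl : 1 ≤ l) (hls : (2 : ℤ) ^ (l - 1) ≤ s) :
    2 ^ (l - 1) ≤ (valueSetM (sortedX s) l (2 * s + 1)).ncard := by
  obtain ⟨l', rfl⟩ : ∃ l', l = l' + 1 := ⟨l - 1, by omega⟩
  simp only [Nat.add_sub_cancel] at hls ⊢
  have hsub := mainInterval s hs l' hls
  have hfin := valueSetM_finite (sortedX s) (l' + 1) (2 * s + 1)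
  have hcard : (Set.Icc (1 : ℤ) (2 ^ l')).ncard = 2 ^ l' := by
    rw [← Finset.coe_Icc, Set.ncard_coe_finset, Int.card_Icc]
    have e : ((2 : ℤ) ^ l' + 1 - 1) = ((2 ^ l' : ℕ) : ℤ) := by push_cast; ring
    rw [e, Int.toNat_natCast]
  calc 2 ^ l' = (Set.Icc (1 : ℤ) (2 ^ l')).ncard := hcard.symm
    _ ≤ (valueSetM (sortedX s) (l' + 1) (2 * s + 1)).ncard :=
        Set.ncard_le_ncard hsub hfin
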